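/- Logarithmic modulus bound for the normalized branching mechanism. Define k(λ) := −ψ(λ)/λ for λ > 0. Assume condition (H1) holds with exponent γ > 0. Then there exists a constant c₁ > 0 such that for all λ ∈ (0,1): 0 ≤ 1 − k(λ) ≤ c₁ (log(1/λ))^{−(2+γ)}. -/
import Mathlib


open MeasureTheory Set Filter Topology

lemma phi_nonneg (x : ℝ) : 0 ≤ Real.exp (-x) - 1 + x := by
  have := Real.add_one_le_exp (-x); linarith

lemma phi_le_linear {x : ℝ} (hx : 0 ≤ x) : Real.exp (-x) - 1 + x ≤ x := by
  have h : Real.exp (-x) ≤ 1 := Real.exp_le_one_iff.mpr (by linarith)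
  linarith

lemma phi_le_sq {x : ℝ} (hx : 0 ≤ x) : Real.exp (-x) - 1 + x ≤ x ^ 2 / 2 := by
  have hq := Real.quadratic_le_exp_of_nonneg hx
  have hmul : Real.exp (-x) * Real.exp x = 1 := by rw [← Real.exp_add]; simp
  nlinarith [mul_le_mul_of_nonneg_left hq (Real.exp_pos (-x)).le, hmul,
    Real.exp_pos (-x), sq_nonneg x, sq_nonneg (x ^ 2), hx]

lemma growth (γ : ℝ) (hγ : 0 < γ) :
    ∃ M : ℝ, 0 < M ∧ ∀ t : ℝ, 0 < t → t ^ (2 + γ) ≤ M * Real.exp (t / 2) := by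
  set m : ℕ := ⌈2 + γ⌉₊ with hm
  have hfac : (0:ℝ) < m.factorial := by positivity
  have hM0 : (0:ℝ) ≤ 2 ^ m * m.factorial := by positivity
  have hMpos : (0:ℝ) < 2 ^ m * m.factorial + 1 := by positivity
  refine ⟨2 ^ m * m.factorial + 1, hMpos, fun t ht => ?_⟩
  have hexp1 : (1:ℝ) ≤ Real.exp (t / 2) := Real.one_le_exp (by linarith)
  rcases le_or_gt t 1 with h1 | h1
  · have h2 : t ^ (2 + γ) ≤ 1 := Real.rpow_le_one ht.le h1 (by linarith)
    calc t ^ (2 + γ) ≤ 1 := h2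
      _ ≤ (2 ^ m * m.factorial + 1) * 1 := by linarith
      _ ≤ (2 ^ m * m.factorial + 1) * Real.exp (t / 2) :=
          mul_le_mul_of_nonneg_left hexp1 hMpos.le
  · have h2 : t ^ (2 + γ) ≤ t ^ (m : ℝ) :=
      Real.rpow_le_rpow_of_exponent_le h1.le (Nat.le_ceil _)
    have h3 : t ^ (m : ℝ) = t ^ m := Real.rpow_natCast t m
    have h4 : (t / 2) ^ m / m.factorial ≤ Real.exp (t / 2) :=
      Real.pow_div_factorial_le_exp _ (by linarith) m
    have h5 : t ^ m = 2 ^ m * (t / 2) ^ m := by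
      rw [← mul_pow]; ring_nf
    calc t ^ (2 + γ) ≤ t ^ m := by rw [← h3]; exact h2
      _ = 2 ^ m * (t / 2) ^ m := h5
      _ ≤ 2 ^ m * (m.factorial * Real.exp (t / 2)) := by
          apply mul_le_mul_of_nonneg_left _ (by positivity)
          rw [div_le_iff₀ hfac] at h4; linarith
      _ ≤ (2 ^ m * m.factorial + 1) * Real.exp (t / 2) := by nlinarith

lemma pointwise_bound (γ l y : ℝ) (hγ : 0 < γ) (hl0 : 0 < l) (hl1 : l < 1)
    (hy0 : 0 < y) :
    Real.exp (-l * y) - 1 + l * y ≤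
      l * Real.sqrt l * min (y ^ 2) y
        + l * (2 / Real.log (1 / l)) ^ (2 + γ)
          * (Ioi (1:ℝ)).indicator (fun z => z * Real.log z ^ (2 + γ)) y := by
  have h2γ : (0:ℝ) < 2 + γ := by linarith
  set s := Real.sqrt l with hs
  set L := Real.log (1 / l) with hL
  have hlog : Real.log l = -L := by rw [hL, one_div, Real.log_inv, neg_neg]
  have hL0 : 0 < L := by rw [hL]; exact Real.log_pos ((one_lt_div hl0).mpr hl1)
  have hs0 : 0 < s := Real.sqrt_pos.mpr hl0
  have hssq : s ^ 2 = l := Real.sq_sqrt hl0.le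
  have hs1 : s < 1 := by nlinarith
  have hsl : l ≤ s := by nlinarith
  have hlogs : Real.log (1 / s) = L / 2 := by
    rw [one_div, Real.log_inv, hs, Real.log_sqrt hl0.le, hlog]; ring
  set c := (2 / L) ^ (2 + γ) with hc
  have hc0 : 0 ≤ c := Real.rpow_nonneg (by positivity) _
  have hcmul : ∀ x : ℝ, 0 ≤ x → c * x ^ (2 + γ) = (2 / L * x) ^ (2 + γ) := by
    intro x hx
    rw [hc, Real.mul_rpow (by positivity) hx]
  clear_value s L c
  clear hs hL hc
  have hly : 0 ≤ l * y := by positivity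
  have hneg : -l * y = -(l * y) := by ring
  have hφ1 : Real.exp (-l * y) - 1 + l * y ≤ (l * y) ^ 2 / 2 := by
    rw [hneg]; exact phi_le_sq hly
  have hφ2 : Real.exp (-l * y) - 1 + l * y ≤ l * y := by
    rw [hneg]; exact phi_le_linear hly
  have hf₁nonneg : ∀ z : ℝ, z ∈ Ioi (1:ℝ) → 0 ≤ z * Real.log z ^ (2 + γ) := by
    intro z hz
    exact mul_nonneg (by linarith [mem_Ioi.mp hz]) (Real.rpow_nonneg
      (Real.log_nonneg (le_of_lt (mem_Ioi.mp hz))) _)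
  have hind_nonneg :
      0 ≤ (Ioi (1:ℝ)).indicator (fun z => z * Real.log z ^ (2 + γ)) y :=
    Set.indicator_nonneg hf₁nonneg y
  rcases le_or_gt y 1 with hy1 | hy1
  · have hmin : min (y ^ 2) y = y ^ 2 := min_eq_left (by nlinarith)
    have hind0 :
        (Ioi (1:ℝ)).indicator (fun z => z * Real.log z ^ (2 + γ)) y = 0 :=
      Set.indicator_of_notMem (by simpa using hy1) _
    have hkey : (l * y) ^ 2 / 2 ≤ l * s * y ^ 2 := by
      have e2 : l * l / 2 ≤ l * s := by nlinarith
      calc (l * y) ^ 2 / 2 = l * l / 2 * y ^ 2 := by ring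
        _ ≤ l * s * y ^ 2 := mul_le_mul_of_nonneg_right e2 (sq_nonneg y)
    rw [hind0, hmin]
    linarith
  · rcases le_or_gt y (1 / s) with hy2 | hy2
    · have hyy : y ≤ y ^ 2 := by nlinarith
      have hmin : min (y ^ 2) y = y := min_eq_right hyy
      have hys : s * y ≤ 1 := by
        rw [le_div_iff₀ hs0] at hy2; linarith
      have hkey : (l * y) ^ 2 / 2 ≤ l * s * y := by
        have e1 : (l * y) ^ 2 = s ^ 3 * y * (s * y) := by rw [← hssq]; ring
        have e2 : s ^ 3 * y * (s * y) ≤ s ^ 3 * y * 1 :=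
          mul_le_mul_of_nonneg_left hys (by positivity)
        have e3 : l * s * y = s ^ 3 * y := by rw [← hssq]; ring
        have e4 : 0 ≤ s ^ 3 * y := by positivity
        rw [e3]; rw [e1]; linarith
      have h0 : 0 ≤ l * c *
          (Ioi (1:ℝ)).indicator (fun z => z * Real.log z ^ (2 + γ)) y :=
        mul_nonneg (mul_nonneg hl0.le hc0) hind_nonneg
      rw [hmin]
      linarith
    · have h1s : 1 < 1 / s := (one_lt_div hs0).mpr hs1
      have hy1' : (1:ℝ) < y := lt_trans h1s hy2
      have hind : (Ioi (1:ℝ)).indicator (fun z => z * Real.log z ^ (2 + γ)) y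
          = y * Real.log y ^ (2 + γ) := Set.indicator_of_mem hy1' _
      have hlogy : L / 2 < Real.log y := by
        have hlt : Real.log (1 / s) < Real.log y :=
          Real.log_lt_log (by positivity) hy2
        rw [hlogs] at hlt; exact hlt
      have hlogy0 : 0 < Real.log y := lt_trans (by positivity) hlogy
      have h1 : (1:ℝ) ≤ (2 / L * Real.log y) ^ (2 + γ) := by
        have hgt : (1:ℝ) ≤ 2 / L * Real.log y := by
          rw [div_mul_eq_mul_div, le_div_iff₀ hL0]; linarith
        calc (1:ℝ) = 1 ^ (2 + γ) := (Real.one_rpow _).symm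
          _ ≤ (2 / L * Real.log y) ^ (2 + γ) :=
              Real.rpow_le_rpow (by norm_num) hgt h2γ.le
      have h2 : c * Real.log y ^ (2 + γ) = (2 / L * Real.log y) ^ (2 + γ) :=
        hcmul _ hlogy0.le
      have hkey : l * y ≤ l * c * (y * Real.log y ^ (2 + γ)) := by
        calc l * y = l * y * 1 := by ring
          _ ≤ l * y * ((2 / L * Real.log y) ^ (2 + γ)) :=
              mul_le_mul_of_nonneg_left h1 (by positivity)
          _ = l * (c * Real.log y ^ (2 + γ)) * y := by rw [h2]; ring
          _ = l * c * (y * Real.log y ^ (2 + γ)) := by ring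
      have h0 : 0 ≤ l * s * min (y ^ 2) y := by
        apply mul_nonneg (by positivity)
        exact le_min (by positivity) hy0.le
      rw [hind]
      linarith

/-- The branching mechanism ψ(λ) = −λ + βλ² + ∫₀^∞ (e^{−λy} − 1 + λy) n(dy). -/
noncomputable def psi (β : ℝ) (n : Measure ℝ) (l : ℝ) : ℝ :=
  -l + β * l ^ 2 + ∫ y in Ioi (0 : ℝ), (Real.exp (-l * y) - 1 + l * y) ∂n

/-- The normalized branching mechanism k(λ) := −ψ(λ)/λ for λ > 0. -/
noncomputable def kFun (β : ℝ) (n : Measure ℝ) (l : ℝ) : ℝ := -psi β n l / l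

/-- Logarithmic modulus bound for the normalized branching mechanism under (H1):
there is c₁ > 0 such that 0 ≤ 1 − k(λ) ≤ c₁ (log(1/λ))^{−(2+γ)} for all λ ∈ (0,1). -/
theorem kFun_log_bound
    (β : ℝ) (hβ : 0 ≤ β) (n : Measure ℝ) [SigmaFinite n]
    (hn : ∫⁻ y in Ioi (0 : ℝ), ENNReal.ofReal (min (y ^ 2) y) ∂n < ⊤)
    (γ : ℝ) (hγ : 0 < γ)
    (hH1 : ∫⁻ y in Ioi (1 : ℝ), ENNReal.ofReal (y * Real.log y ^ (2 + γ)) ∂n < ⊤) :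
    ∃ c₁ : ℝ, 0 < c₁ ∧ ∀ l : ℝ, 0 < l → l < 1 →
      0 ≤ 1 - kFun β n l ∧ 1 - kFun β n l ≤ c₁ * Real.log (1 / l) ^ (-(2 + γ)) := by
  have h2γ : (0:ℝ) < 2 + γ := by linarith
  -- integrability of the two dominating functions
  have hgmeas : Measurable fun y : ℝ => min (y ^ 2) y :=
    (measurable_id.pow_const 2).min measurable_id
  have hg : IntegrableOn (fun y : ℝ => min (y ^ 2) y) (Ioi 0) n := by
    refine ⟨hgmeas.aestronglyMeasurable, ?_⟩
    rw [hasFiniteIntegral_iff_ofReal ?_]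
    · exact hn
    · filter_upwards [ae_restrict_mem measurableSet_Ioi] with y hy
      exact le_min (by positivity) (le_of_lt hy)
  have hf₁nonneg : ∀ y : ℝ, y ∈ Ioi (1:ℝ) → 0 ≤ y * Real.log y ^ (2 + γ) := by
    intro y hy
    exact mul_nonneg (by linarith [mem_Ioi.mp hy]) (Real.rpow_nonneg
      (Real.log_nonneg (le_of_lt (mem_Ioi.mp hy))) _)
  have hfmeas : Measurable fun y : ℝ => y * Real.log y ^ (2 + γ) := by
    measurability
  have hh : IntegrableOn (fun y : ℝ => y * Real.log y ^ (2 + γ)) (Ioi 1) n := by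
    refine ⟨hfmeas.aestronglyMeasurable, ?_⟩
    rw [hasFiniteIntegral_iff_ofReal ?_]
    · exact hH1
    · filter_upwards [ae_restrict_mem measurableSet_Ioi] with y hy
      exact hf₁nonneg y hy
  have hinter : Ioi (1:ℝ) ∩ Ioi (0:ℝ) = Ioi 1 := by
    rw [Ioi_inter_Ioi]; norm_num
  have hres : (n.restrict (Ioi (0:ℝ))).restrict (Ioi 1) = n.restrict (Ioi 1) := by
    rw [Measure.restrict_restrict measurableSet_Ioi, hinter]
  have hindint : Integrable
      ((Ioi (1:ℝ)).indicator fun y => y * Real.log y ^ (2 + γ))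
      (n.restrict (Ioi 0)) := by
    rw [integrable_indicator_iff measurableSet_Ioi]
    show Integrable _ ((n.restrict (Ioi (0:ℝ))).restrict (Ioi 1))
    rw [hres]; exact hh
  set A := ∫ y in Ioi (0:ℝ), min (y ^ 2) y ∂n with hA
  set B := ∫ y in Ioi (1:ℝ), y * Real.log y ^ (2 + γ) ∂n with hB
  have hBind : ∫ y in Ioi (0:ℝ),
      (Ioi (1:ℝ)).indicator (fun y => y * Real.log y ^ (2 + γ)) y ∂n = B := by
    rw [integral_indicator measurableSet_Ioi]
    show ∫ y, y * Real.log y ^ (2 + γ) ∂((n.restrict (Ioi (0:ℝ))).restrict (Ioi 1)) = B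
    rw [hres]
  have hA0 : 0 ≤ A := by
    rw [hA]
    apply integral_nonneg_of_ae
    filter_upwards [ae_restrict_mem measurableSet_Ioi] with y hy
    exact le_min (by positivity) (le_of_lt hy)
  have hB0 : 0 ≤ B := by
    rw [hB]
    apply integral_nonneg_of_ae
    filter_upwards [ae_restrict_mem measurableSet_Ioi] with y hy
    exact hf₁nonneg y hy
  clear_value A B
  obtain ⟨M, hM, hMt⟩ := growth γ hγ
  have h2pow : (0:ℝ) ≤ 2 ^ (2 + γ) := Real.rpow_nonneg (by norm_num) _
  refine ⟨(β + A) * M + 2 ^ (2 + γ) * B + 1, ?_, fun l hl0 hl1 => ?_⟩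
  · have h1 : 0 ≤ (β + A) * M := mul_nonneg (by linarith) hM.le
    have h2 : 0 ≤ 2 ^ (2 + γ) * B := mul_nonneg h2pow hB0
    linarith
  -- now fix l ∈ (0,1)
  set L := Real.log (1 / l) with hL
  have hlog : Real.log l = -L := by rw [hL, one_div, Real.log_inv, neg_neg]
  have hL0 : 0 < L := by rw [hL]; exact Real.log_pos ((one_lt_div hl0).mpr hl1)
  set s := Real.sqrt l with hs
  have hs0 : 0 < s := Real.sqrt_pos.mpr hl0
  have hssq : s ^ 2 = l := Real.sq_sqrt hl0.le
  have hs1 : s < 1 := by nlinarith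
  have hsl : l ≤ s := by nlinarith
  have hsexp : s = Real.exp (-(L / 2)) := by
    have h1 : Real.exp (-(L / 2)) ^ 2 = l := by
      rw [sq, ← Real.exp_add]
      have e : -(L / 2) + -(L / 2) = Real.log l := by rw [hlog]; ring
      rw [e, Real.exp_log hl0]
    rw [hs, ← h1, Real.sqrt_sq (Real.exp_nonneg _)]
  have hLp : 0 < L ^ (2 + γ) := Real.rpow_pos_of_pos hL0 _
  have hD0 : 0 < L ^ (-(2 + γ)) := Real.rpow_pos_of_pos hL0 _
  have hDinv : L ^ (-(2 + γ)) = (L ^ (2 + γ))⁻¹ := Real.rpow_neg hL0.le _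
  have hsM : s ≤ M * L ^ (-(2 + γ)) := by
    have key : s * L ^ (2 + γ) ≤ M := by
      rw [hsexp]
      calc Real.exp (-(L / 2)) * L ^ (2 + γ)
          ≤ Real.exp (-(L / 2)) * (M * Real.exp (L / 2)) :=
            mul_le_mul_of_nonneg_left (hMt L hL0) (Real.exp_nonneg _)
        _ = M * (Real.exp (-(L / 2)) * Real.exp (L / 2)) := by ring
        _ = M := by rw [← Real.exp_add]; norm_num
    rw [hDinv, ← div_eq_mul_inv, le_div_iff₀ hLp]
    exact key
  set c := (2 / L) ^ (2 + γ) with hc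
  have hc0 : 0 ≤ c := Real.rpow_nonneg (by positivity) _
  have hcD : c = 2 ^ (2 + γ) * L ^ (-(2 + γ)) := by
    rw [hc, Real.div_rpow (by norm_num) hL0.le, hDinv, div_eq_mul_inv]
  -- pointwise bound
  have hpt_ae : ∀ᵐ y ∂(n.restrict (Ioi (0:ℝ))),
      Real.exp (-l * y) - 1 + l * y ≤
        l * s * min (y ^ 2) y
          + l * c * (Ioi (1:ℝ)).indicator (fun z => z * Real.log z ^ (2 + γ)) y := by
    filter_upwards [ae_restrict_mem measurableSet_Ioi] with y hy
    exact pointwise_bound γ l y hγ hl0 hl1 (mem_Ioi.mp hy)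
  clear_value s c L
  clear hs hc hL hsexp hlog
  have hGint : Integrable (fun y : ℝ =>
      l * s * min (y ^ 2) y
        + l * c * (Ioi (1:ℝ)).indicator (fun z => z * Real.log z ^ (2 + γ)) y)
      (n.restrict (Ioi 0)) :=
    (hg.const_mul (l * s)).add (hindint.const_mul (l * c))
  have hφmeas : AEStronglyMeasurable (fun y : ℝ => Real.exp (-l * y) - 1 + l * y)
      (n.restrict (Ioi 0)) :=
    (((Real.continuous_exp.comp (continuous_const.mul continuous_id)).sub
      continuous_const).add (continuous_const.mul continuous_id)).aestronglyMeasurable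
  have hφnonneg : ∀ y : ℝ, 0 ≤ Real.exp (-l * y) - 1 + l * y := by
    intro y
    have h := phi_nonneg (l * y)
    have hneg : -l * y = -(l * y) := by ring
    rw [hneg]; linarith
  have hφint : Integrable (fun y : ℝ => Real.exp (-l * y) - 1 + l * y)
      (n.restrict (Ioi 0)) := by
    apply hGint.mono hφmeas
    filter_upwards [hpt_ae] with y h1
    have hGnn : 0 ≤ l * s * min (y ^ 2) y
        + l * c * (Ioi (1:ℝ)).indicator (fun z => z * Real.log z ^ (2 + γ)) y :=
      le_trans (hφnonneg y) h1
    rw [Real.norm_eq_abs, Real.norm_eq_abs, abs_of_nonneg (hφnonneg y),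
      abs_of_nonneg hGnn]
    exact h1
  have hIle : (∫ y in Ioi (0:ℝ), (Real.exp (-l * y) - 1 + l * y) ∂n)
      ≤ ∫ y in Ioi (0:ℝ),
        (l * s * min (y ^ 2) y
          + l * c * (Ioi (1:ℝ)).indicator (fun z => z * Real.log z ^ (2 + γ)) y) ∂n :=
    integral_mono_ae hφint hGint hpt_ae
  have hGval : ∫ y in Ioi (0:ℝ),
      (l * s * min (y ^ 2) y
        + l * c * (Ioi (1:ℝ)).indicator (fun z => z * Real.log z ^ (2 + γ)) y) ∂n
      = l * s * A + l * c * B := by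
    rw [integral_add (hg.const_mul (l * s)) (hindint.const_mul (l * c)),
      integral_const_mul, integral_const_mul, hBind, ← hA]
  have hI0 : 0 ≤ ∫ y in Ioi (0:ℝ), (Real.exp (-l * y) - 1 + l * y) ∂n :=
    integral_nonneg hφnonneg
  have hl_ne : l ≠ 0 := ne_of_gt hl0
  have hkeq : 1 - kFun β n l
      = β * l + (∫ y in Ioi (0:ℝ), (Real.exp (-l * y) - 1 + l * y) ∂n) / l := by
    rw [kFun, psi]; field_simp; ring
  constructor
  · rw [hkeq]
    have h1 : 0 ≤ (∫ y in Ioi (0:ℝ), (Real.exp (-l * y) - 1 + l * y) ∂n) / l :=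
      div_nonneg hI0 hl0.le
    have h2 : 0 ≤ β * l := mul_nonneg hβ hl0.le
    linarith
  · rw [hkeq]
    have hdiv : (∫ y in Ioi (0:ℝ), (Real.exp (-l * y) - 1 + l * y) ∂n) / l
        ≤ s * A + c * B := by
      rw [div_le_iff₀ hl0]
      calc (∫ y in Ioi (0:ℝ), (Real.exp (-l * y) - 1 + l * y) ∂n)
          ≤ l * s * A + l * c * B := hGval ▸ hIle
        _ = (s * A + c * B) * l := by ring
    have hβl : β * l ≤ β * s := mul_le_mul_of_nonneg_left hsl hβ
    have hsum : β * s + s * A ≤ (β + A) * M * L ^ (-(2 + γ)) := by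
      have e : β * s + s * A = (β + A) * s := by ring
      rw [e, mul_assoc]
      exact mul_le_mul_of_nonneg_left hsM (by linarith)
    have hcB : c * B = 2 ^ (2 + γ) * B * L ^ (-(2 + γ)) := by
      rw [hcD]; ring
    calc β * l + (∫ y in Ioi (0:ℝ), (Real.exp (-l * y) - 1 + l * y) ∂n) / l
        ≤ β * s + (s * A + c * B) := by linarith
      _ ≤ (β + A) * M * L ^ (-(2 + γ)) + 2 ^ (2 + γ) * B * L ^ (-(2 + γ)) := by
          linarith [hsum, hcB.le]
      _ ≤ ((β + A) * M + 2 ^ (2 + γ) * B + 1) * L ^ (-(2 + γ)) := by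
          have e : ((β + A) * M + 2 ^ (2 + γ) * B + 1) * L ^ (-(2 + γ))
              = (β + A) * M * L ^ (-(2 + γ)) + 2 ^ (2 + γ) * B * L ^ (-(2 + γ))
                + L ^ (-(2 + γ)) := by ring
          linarith [hD0]
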